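/- arXiv:1712.03358 — 2 statements merged into one kernel-verified Lean document; each statement's English description precedes it below -/
import Mathlib

section
/- Let τ be a symmetric positive definite l×l matrix, σ ≠ 0 real, A ∈ ℝˡ, γ ∈ ℝˡ, d ∈ (0,1). If ((1+d)τA − (1−d)γ)'((3+d)(1−d)σ²τ + 4(τA)(τA)')⁻¹((1+d)τA − (1−d)γ) ≤ 1, then [σ²τ + (τA)(τA)'] − 2⁻²[(1+d)²σ²τ + ((1+d)τA − (1−d)γ)((1+d)τA − (1−d)γ)'] is positive semidefinite. -/
/-!
Write `a = τA`, `b = (1+d)τA − (1−d)γ` and `D = (3+d)(1−d)σ²τ + 4aaᵀ`. Since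
`4 − (1+d)² = (3+d)(1−d)`, the difference of the two mean squared error matrices is `(D − bbᵀ)/4`.
For positive definite `D`, the matrices `D − bbᵀ` and `1 − bᵀD⁻¹b` are the two Schur complements
of the block matrix `[[D, b], [bᵀ, 1]]`, so one is positive semidefinite iff the other is.
-/

open Matrix

theorem Matrix.PosDef.posSemidef_sub_vecMulVec_iff {n K : Type*} [Fintype n] [DecidableEq n]
    [Field K] [PartialOrder K] [StarRing K] [StarOrderedRing K] {D : Matrix n n K}
    (hD : D.PosDef) (b : n → K) :
    (D - vecMulVec b (star b)).PosSemidef ↔ star b ⬝ᵥ D⁻¹ *ᵥ b ≤ 1 := by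
  let B : Matrix n Unit K := replicateCol Unit b
  have : Invertible D := hD.isUnit.invertible
  have : Invertible (1 : Matrix Unit Unit K) := invertibleOne
  have hSchur₂₂ : B * (1 : Matrix Unit Unit K)⁻¹ * Bᴴ = vecMulVec b (star b) := by
    simp [B, vecMulVec_eq Unit]
  have hSchur₁₁ : (1 : Matrix Unit Unit K) - Bᴴ * D⁻¹ * B =
      diagonal fun _ => 1 - star b ⬝ᵥ D⁻¹ *ᵥ b := by
    rw [conjTranspose_replicateCol, Matrix.mul_assoc, ← replicateCol_mulVec,
      replicateRow_mul_replicateCol]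
    ext i j
    simp
  rw [← hSchur₂₂, ← PosDef.one.fromBlocks₂₂ D B, hD.fromBlocks₁₁, hSchur₁₁,
    posSemidef_diagonal_iff]
  simp

theorem stmt_14 {l : ℕ} (τ : Matrix (Fin l) (Fin l) ℝ) (hτ : τ.PosDef)
    (σ : ℝ) (hσ : σ ≠ 0) (A γ : Fin l → ℝ) (d : ℝ) (hd : 0 < d) (hd1 : d < 1)
    (h : ((1 + d) • τ.mulVec A - (1 - d) • γ) ⬝ᵥ
        (((3 + d) * (1 - d) * σ ^ 2) • τ +
          (4 : ℝ) • vecMulVec (τ.mulVec A) (τ.mulVec A))⁻¹.mulVec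
          ((1 + d) • τ.mulVec A - (1 - d) • γ) ≤ 1) :
    ((σ ^ 2 • τ + vecMulVec (τ.mulVec A) (τ.mulVec A)) -
      ((2 : ℝ)⁻¹ ^ 2) •
        (((1 + d) ^ 2 * σ ^ 2) • τ +
          vecMulVec ((1 + d) • τ.mulVec A - (1 - d) • γ)
            ((1 + d) • τ.mulVec A - (1 - d) • γ))).PosSemidef := by
  set a := τ *ᵥ A
  set b := (1 + d) • a - (1 - d) • γ
  set c := (3 + d) * (1 - d) * σ ^ 2 with hc_def
  have hc : 0 < c := by
    have : 0 < (3 + d) * (1 - d) := by nlinarith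
    positivity
  have haa : (vecMulVec a a).PosSemidef := by simpa using posSemidef_vecMulVec_self_star a
  have hD : (c • τ + (4 : ℝ) • vecMulVec a a).PosDef :=
    (hτ.smul hc).add_posSemidef (haa.smul (by norm_num))
  have hdiff : σ ^ 2 • τ + vecMulVec a a - (2⁻¹ : ℝ) ^ 2 • (((1 + d) ^ 2 * σ ^ 2) • τ +
      vecMulVec b b) = (4⁻¹ : ℝ) • (c • τ + (4 : ℝ) • vecMulVec a a - vecMulVec b b) := by
    rw [hc_def]
    module
  rw [hdiff]
  exact ((hD.posSemidef_sub_vecMulVec_iff b).mpr (by simpa using h)).smul (by norm_num)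
end

section
/- Let X be a real n×l matrix, δ ∈ ℝⁿ, and let Δ, E be symmetric l×l matrices and b₁, b₂ ∈ ℝˡ with Δ = MSEM difference satisfying Δ + (b₁−b₂)(b₁−b₂)' symmetric. Define A = X(Δ + (b₁−b₂)(b₁−b₂)')X' + δδ' and θ = δ + X(b₁−b₂). If A is positive semidefinite, θ lies in the column space of A, and θ'A⁻θ ≤ 1 for a generalized inverse A⁻ of A, then XΔX' − X(b₁−b₂)δ' − δ(b₁−b₂)'X' is positive semidefinite, i.e., A − θθ' ≥ 0 and XΔX' − X(b₁−b₂)δ' − δ(b₁−b₂)'X' = A − θθ'. -/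
/-!
After expanding `A`, the difference of the two prediction MSE matrices is exactly the rank-one
downdate `A - θθ'`. Since `θ = A x` lies in the range of `A`, the form `v ↦ v'Av` dominates
`(v'θ)² = (v'Ax)²` up to the factor `x'Ax` by Cauchy–Schwarz, and `x'Ax = θ'A⁻θ ≤ 1` for every
generalized inverse `A⁻` of `A`.
-/

open Matrix

namespace Matrix

variable {m n R : Type*} [Fintype n]

theorem mul_mul_transpose_sub_vecMulVec_sub_vecMulVec_eq [CommRing R] (X : Matrix m n R)
    (Δ : Matrix n n R) (b : n → R) (δ : m → R) :
    X * Δ * Xᵀ - vecMulVec (X *ᵥ b) δ - vecMulVec δ (X *ᵥ b) =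
      X * (Δ + vecMulVec b b) * Xᵀ + vecMulVec δ δ - vecMulVec (δ + X *ᵥ b) (δ + X *ᵥ b) := by
  rw [Matrix.mul_add, Matrix.add_mul, mul_vecMulVec, vecMulVec_mul, vecMul_transpose,
    add_vecMulVec, vecMulVec_add, vecMulVec_add]
  abel

theorem dotProduct_mulVec_eq_of_mul_mul_eq [CommSemiring R] {A G : Matrix n n R} (hA : A.IsSymm)
    (hAG : A * G * A = A) {x θ : n → R} (hx : A *ᵥ x = θ) :
    x ⬝ᵥ A *ᵥ x = θ ⬝ᵥ G *ᵥ θ := by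
  have hxA : x ᵥ* A = θ := by rw [← hA.eq, vecMul_transpose, hx]
  rw [← hAG, ← mulVec_mulVec, ← mulVec_mulVec, dotProduct_mulVec, hxA, hx]

variable [CommRing R] [LinearOrder R] [IsStrictOrderedRing R] [StarRing R] [TrivialStar R]

theorem PosSemidef.dotProduct_mulVec_sq_le {A : Matrix n n R} (hA : A.PosSemidef) (v x : n → R) :
    (v ⬝ᵥ A *ᵥ x) ^ 2 ≤ (v ⬝ᵥ A *ᵥ v) * (x ⬝ᵥ A *ᵥ x) := by
  classical
  have hB : ∀ y, 0 ≤ toLinearMap₂' R A y y := fun y ↦ by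
    rw [toLinearMap₂'_apply']
    simpa using hA.dotProduct_mulVec_nonneg y
  have hsymm : x ⬝ᵥ A *ᵥ v = v ⬝ᵥ A *ᵥ x := by
    rw [dotProduct_comm, ← vecMul_transpose, (isHermitian_iff_isSymm.mp hA.isHermitian).eq,
      dotProduct_mulVec]
  simpa only [toLinearMap₂'_apply', hsymm, ← sq] using
    LinearMap.BilinForm.apply_mul_apply_le_of_forall_zero_le _ hB v x

theorem PosSemidef.sub_vecMulVec {A : Matrix n n R} (hA : A.PosSemidef) {x θ : n → R}
    (hx : A *ᵥ x = θ) (hle : x ⬝ᵥ A *ᵥ x ≤ 1) : (A - vecMulVec θ θ).PosSemidef := by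
  refine .of_dotProduct_mulVec_nonneg
    (hA.isHermitian.sub (isHermitian_iff_isSymm.mpr (transpose_vecMulVec θ θ))) fun v ↦ ?_
  have hθ : v ⬝ᵥ vecMulVec θ θ *ᵥ v = (v ⬝ᵥ A *ᵥ x) ^ 2 := by
    rw [dotProduct_mulVec, vecMul_vecMulVec, smul_dotProduct, smul_eq_mul, dotProduct_comm θ,
      hx, sq]
  have hv : 0 ≤ v ⬝ᵥ A *ᵥ v := by simpa using hA.dotProduct_mulVec_nonneg v
  have hsq : (v ⬝ᵥ A *ᵥ x) ^ 2 ≤ v ⬝ᵥ A *ᵥ v :=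
    (hA.dotProduct_mulVec_sq_le v x).trans (mul_le_of_le_one_right hv hle)
  rw [star_trivial, sub_mulVec, dotProduct_sub, hθ]
  linarith

end Matrix

theorem stmt_18_general {n l : ℕ} (X : Matrix (Fin n) (Fin l) ℝ) (δ : Fin n → ℝ)
    (Δ : Matrix (Fin l) (Fin l) ℝ)
    (b₁ b₂ : Fin l → ℝ)
    (A Ag : Matrix (Fin n) (Fin n) ℝ) (θ : Fin n → ℝ)
    (hA : A = X * (Δ + vecMulVec (b₁ - b₂) (b₁ - b₂)) * Xᵀ + vecMulVec δ δ)
    (hθ : θ = δ + X.mulVec (b₁ - b₂))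
    (hApsd : A.PosSemidef)
    (hrange : ∃ x, A.mulVec x = θ)
    (hAg : A * Ag * A = A)
    (hle : θ ⬝ᵥ Ag.mulVec θ ≤ 1) :
    X * Δ * Xᵀ - vecMulVec (X.mulVec (b₁ - b₂)) δ -
        vecMulVec δ (X.mulVec (b₁ - b₂)) =
      A - vecMulVec θ θ ∧
    (X * Δ * Xᵀ - vecMulVec (X.mulVec (b₁ - b₂)) δ -
        vecMulVec δ (X.mulVec (b₁ - b₂))).PosSemidef := by
  have hdiff : X * Δ * Xᵀ - vecMulVec (X.mulVec (b₁ - b₂)) δ -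
      vecMulVec δ (X.mulVec (b₁ - b₂)) = A - vecMulVec θ θ := by
    rw [hA, hθ, mul_mul_transpose_sub_vecMulVec_sub_vecMulVec_eq]
  obtain ⟨x, hx⟩ := hrange
  have hxAx : x ⬝ᵥ A *ᵥ x ≤ 1 := by
    rwa [dotProduct_mulVec_eq_of_mul_mul_eq (isHermitian_iff_isSymm.mp hApsd.isHermitian) hAg hx]
  exact ⟨hdiff, hdiff ▸ hApsd.sub_vecMulVec hx hxAx⟩

theorem stmt_18 {n l : ℕ} (X : Matrix (Fin n) (Fin l) ℝ) (δ : Fin n → ℝ)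
    (Δ : Matrix (Fin l) (Fin l) ℝ) (hΔ : Δ.IsHermitian)
    (b₁ b₂ : Fin l → ℝ)
    (A Ag : Matrix (Fin n) (Fin n) ℝ) (θ : Fin n → ℝ)
    (hA : A = X * (Δ + vecMulVec (b₁ - b₂) (b₁ - b₂)) * Xᵀ + vecMulVec δ δ)
    (hθ : θ = δ + X.mulVec (b₁ - b₂))
    (hApsd : A.PosSemidef)
    (hrange : ∃ x, A.mulVec x = θ)
    (hAg : A * Ag * A = A)
    (hle : θ ⬝ᵥ Ag.mulVec θ ≤ 1) :
    X * Δ * Xᵀ - vecMulVec (X.mulVec (b₁ - b₂)) δ -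
        vecMulVec δ (X.mulVec (b₁ - b₂)) =
      A - vecMulVec θ θ ∧
    (X * Δ * Xᵀ - vecMulVec (X.mulVec (b₁ - b₂)) δ -
        vecMulVec δ (X.mulVec (b₁ - b₂))).PosSemidef :=
  stmt_18_general X δ Δ b₁ b₂ A Ag θ hA hθ hApsd hrange hAg hle
end
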